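/- Let R = ℤ[ε,a]/(ε²−1, (1+ε)a, (a−(1−ε))²(a+(1−ε))), and consider the 2-valued series F_t(x,y) = 1 + (1−ε)(x+y)t + (−ε(x²+y²) + axy)t² over R. In the ring A = R[x,y,z][S]/(S² − (1−ε)(x+y)S + (−ε(x²+y²)+axy)), with S' := (1−ε)(x+y) − S, the following identity holds in A[t]: (1 + (1−ε)(S+z)t + (−ε(S²+z²)+aSz)t²)·(1 + (1−ε)(S'+z)t + (−ε(S'²+z²)+aS'z)t²) = 1 + 2(1−ε)(x+y+z)t + [2(1−2ε)(x²+y²+z²) + (a+4)(1−ε)(xy+xz+yz)]t² + [2(1−ε)(x³+y³+z³) + 2(1−ε)(1+a)(x²y+x²z+y²x+y²z+z²x+z²y) + 2(1−ε)(a²−a+4)xyz]t³ + [(x⁴+y⁴+z⁴) + 2a(x³y+x³z+y³x+y³z+z³x+z³y) + (2+a²)(x²y²+x²z²+y²z²) + 2(a²+a)(x²yz+xy²z+xyz²)]t⁴. -/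

import Mathlib

noncomputable section

open MvPolynomial

/-- The ideal `(ε²−1, (1+ε)a, (a−(1−ε))²(a+(1−ε)))` of `ℤ[ε,a]`, with `ε = X 0`, `a = X 1`. -/
def I19 : Ideal (MvPolynomial (Fin 2) ℤ) :=
  Ideal.span {(X 0 : MvPolynomial (Fin 2) ℤ) ^ 2 - 1,
    (1 + (X 0 : MvPolynomial (Fin 2) ℤ)) * X 1,
    ((X 1 : MvPolynomial (Fin 2) ℤ) - (1 - X 0)) ^ 2 * (X 1 + (1 - X 0))}

/-- The base ring `R = ℤ[ε,a]/(ε²−1, (1+ε)a, (a−(1−ε))²(a+(1−ε)))`. -/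
abbrev R19 : Type := MvPolynomial (Fin 2) ℤ ⧸ I19

/-- The class of `ε` in `R`. -/
def εR : R19 := Ideal.Quotient.mk I19 (X 0)

/-- The class of `a` in `R`. -/
def aR : R19 := Ideal.Quotient.mk I19 (X 1)

/-- The polynomial ring `R[x,y,z]`. -/
abbrev B19 : Type := MvPolynomial (Fin 3) R19

instance instCommRingB19 : CommRing B19 := inferInstance

/-- `ε` as an element of `R[x,y,z]`. -/
def cε : B19 := C εR

/-- `a` as an element of `R[x,y,z]`. -/
def ca : B19 := C aR

/-- `x`. -/
def x19 : B19 := X 0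

/-- `y`. -/
def y19 : B19 := X 1

/-- `z`. -/
def z19 : B19 := X 2

/-- `F₁(x,y) = (1−ε)(x+y)`, the coefficient of `t` in the 2-valued series. -/
def F1 : B19 := (1 - cε) * (x19 + y19)

/-- `F₂(x,y) = −ε(x²+y²) + a·x·y`, the coefficient of `t²` in the 2-valued series. -/
def F2 : B19 := -cε * (x19 ^ 2 + y19 ^ 2) + ca * x19 * y19

/-- The quadratic polynomial `S² − F₁(x,y)·S + F₂(x,y)` defining the universal splitting
algebra `A = R[x,y,z][S]/(S² − F₁S + F₂)`. -/
def q19 : Polynomial B19 :=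
  Polynomial.X ^ 2 - Polynomial.C F1 * Polynomial.X + Polynomial.C F2

/-- The first root `S` of the 2-valued series in the splitting algebra. -/
def S19 : AdjoinRoot q19 := AdjoinRoot.root q19

/-- The conjugate root `S' = F₁(x,y) − S`. -/
def S19' : AdjoinRoot q19 := AdjoinRoot.of q19 F1 - S19

/-- `ε` in the splitting algebra. -/
def εA : AdjoinRoot q19 := AdjoinRoot.of q19 cε

/-- `a` in the splitting algebra. -/
def aA : AdjoinRoot q19 := AdjoinRoot.of q19 ca

/-- `z` in the splitting algebra. -/
def zA : AdjoinRoot q19 := AdjoinRoot.of q19 z19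

end

/-! The product is symmetric in the two roots `S`, `S'` of `T² − F₁T + F₂`, so its
coefficients are polynomials in `S + S' = F₁(x,y)` and `S·S' = F₂(x,y)`. What remains is a
polynomial identity in `ε, a, x, y, z` modulo `ε² = 1`, `(1+ε)a = 0` and the cubic relation
on `a`; the cubic relation is needed only for the coefficient of `t⁴`. -/

section Relations

open Polynomial

variable {R : Type*} [CommRing R]

theorem series_mul_series_of_vieta {u e a s s' z p q : R} (hp : s + s' = p) (hq : s * s' = q) :
    (1 + C (u * (s + z)) * X + C (-e * (s ^ 2 + z ^ 2) + a * s * z) * X ^ 2)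
      * (1 + C (u * (s' + z)) * X + C (-e * (s' ^ 2 + z ^ 2) + a * s' * z) * X ^ 2)
    = 1 + C (u * (p + 2 * z)) * X
      + C (u ^ 2 * (q + z * p + z ^ 2) - e * (p ^ 2 - 2 * q + 2 * z ^ 2) + a * z * p) * X ^ 2
      + C (u * (a * z * (2 * q + z * p)
          - e * (q * p + p * z ^ 2 + z * (p ^ 2 - 2 * q) + 2 * z ^ 3))) * X ^ 3
      + C (e ^ 2 * (q ^ 2 + z ^ 2 * (p ^ 2 - 2 * q) + z ^ 4) - e * a * z * (q * p + z ^ 2 * p)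
          + a ^ 2 * z ^ 2 * q) * X ^ 4 := by
  subst hp hq
  simp only [map_add, map_sub, map_mul, map_neg, map_pow, map_ofNat]
  ring

theorem series_mul_series_of_relations {e a x y z s s' : R} (hε : e ^ 2 = 1)
    (ha : (1 + e) * a = 0) (hc : (a - (1 - e)) ^ 2 * (a + (1 - e)) = 0)
    (hsum : s + s' = (1 - e) * (x + y)) (hprod : s * s' = -e * (x ^ 2 + y ^ 2) + a * x * y) :
    (1 + C ((1 - e) * (s + z)) * X + C (-e * (s ^ 2 + z ^ 2) + a * s * z) * X ^ 2)
      * (1 + C ((1 - e) * (s' + z)) * X + C (-e * (s' ^ 2 + z ^ 2) + a * s' * z) * X ^ 2)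
    = 1 + C (2 * (1 - e) * (x + y + z)) * X
      + C (2 * (1 - 2 * e) * (x ^ 2 + y ^ 2 + z ^ 2)
          + (a + 4) * (1 - e) * (x * y + x * z + y * z)) * X ^ 2
      + C (2 * (1 - e) * (x ^ 3 + y ^ 3 + z ^ 3)
          + 2 * (1 - e) * (1 + a)
            * (x ^ 2 * y + x ^ 2 * z + y ^ 2 * x + y ^ 2 * z + z ^ 2 * x + z ^ 2 * y)
          + 2 * (1 - e) * (a ^ 2 - a + 4) * (x * y * z)) * X ^ 3
      + C ((x ^ 4 + y ^ 4 + z ^ 4)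
          + 2 * a * (x ^ 3 * y + x ^ 3 * z + y ^ 3 * x + y ^ 3 * z + z ^ 3 * x + z ^ 3 * y)
          + (2 + a ^ 2) * (x ^ 2 * y ^ 2 + x ^ 2 * z ^ 2 + y ^ 2 * z ^ 2)
          + 2 * (a ^ 2 + a) * (x ^ 2 * y * z + x * y ^ 2 * z + x * y * z ^ 2)) * X ^ 4 := by
  rw [series_mul_series_of_vieta hsum hprod]
  -- left in context, the relations on `s`, `s'` send `grind`'s Gröbner basis computation astray
  clear hsum hprod
  congrm 1 + C ?_ * X + C ?_ * X ^ 2 + C ?_ * X ^ 3 + C ?_ * X ^ 4 <;> grind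

end Relations

section QuotientRing

open MvPolynomial

theorem εR_sq : εR ^ 2 = 1 := by
  have h : Ideal.Quotient.mk I19 (X 0 ^ 2 - 1) = 0 :=
    Ideal.Quotient.eq_zero_iff_mem.mpr (Ideal.subset_span (by simp))
  rw [map_sub, map_pow, map_one, sub_eq_zero] at h
  exact h

theorem one_add_εR_mul_aR : (1 + εR) * aR = 0 := by
  have h : Ideal.Quotient.mk I19 ((1 + X 0) * X 1) = 0 :=
    Ideal.Quotient.eq_zero_iff_mem.mpr (Ideal.subset_span (by simp))
  rwa [map_mul, map_add, map_one] at h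

theorem aR_sub_sq_mul_aR_add : (aR - (1 - εR)) ^ 2 * (aR + (1 - εR)) = 0 := by
  have h : Ideal.Quotient.mk I19 ((X 1 - (1 - X 0)) ^ 2 * (X 1 + (1 - X 0))) = 0 :=
    Ideal.Quotient.eq_zero_iff_mem.mpr (Ideal.subset_span (by simp))
  rwa [map_mul, map_pow, map_add, map_sub, map_sub, map_one] at h

end QuotientRing

section SplittingAlgebra

open Polynomial

theorem εA_sq : εA ^ 2 = 1 := by
  simpa [εA, cε] using congrArg ((AdjoinRoot.of q19).comp MvPolynomial.C) εR_sq

theorem one_add_εA_mul_aA : (1 + εA) * aA = 0 := by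
  simpa [εA, aA, cε, ca] using
    congrArg ((AdjoinRoot.of q19).comp MvPolynomial.C) one_add_εR_mul_aR

theorem aA_sub_sq_mul_aA_add : (aA - (1 - εA)) ^ 2 * (aA + (1 - εA)) = 0 := by
  simpa [εA, aA, cε, ca] using
    congrArg ((AdjoinRoot.of q19).comp MvPolynomial.C) aR_sub_sq_mul_aR_add

theorem of_F1 : AdjoinRoot.of q19 F1
    = (1 - εA) * (AdjoinRoot.of q19 x19 + AdjoinRoot.of q19 y19) := by
  simp only [F1, map_mul, map_sub, map_one, map_add]
  rfl

theorem of_F2 : AdjoinRoot.of q19 F2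
    = -εA * (AdjoinRoot.of q19 x19 ^ 2 + AdjoinRoot.of q19 y19 ^ 2)
      + aA * AdjoinRoot.of q19 x19 * AdjoinRoot.of q19 y19 := by
  simp only [F2, map_mul, map_add, map_neg, map_pow]
  rfl

theorem S19_add_S19' : S19 + S19'
    = (1 - εA) * (AdjoinRoot.of q19 x19 + AdjoinRoot.of q19 y19) := by
  rw [S19', add_sub_cancel, of_F1]

theorem S19_mul_S19' : S19 * S19' = -εA * (AdjoinRoot.of q19 x19 ^ 2
    + AdjoinRoot.of q19 y19 ^ 2) + aA * AdjoinRoot.of q19 x19 * AdjoinRoot.of q19 y19 := by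
  have h : AdjoinRoot.mk q19 (X ^ 2 - C F1 * X + C F2) = 0 := AdjoinRoot.mk_self
  simp only [map_add, map_sub, map_mul, map_pow, AdjoinRoot.mk_X, AdjoinRoot.mk_C] at h
  rw [S19', ← of_F2, S19]
  linear_combination -h

end SplittingAlgebra

/-- Over `R = ℤ[ε,a]/(ε²−1, (1+ε)a, (a−(1−ε))²(a+(1−ε)))`, in the universal
splitting algebra `A = R[x,y,z][S]/(S² − (1−ε)(x+y)S + (−ε(x²+y²)+axy))` with
`S' = (1−ε)(x+y) − S`, the product
`(1 + (1−ε)(S+z)t + (−ε(S²+z²)+aSz)t²)(1 + (1−ε)(S'+z)t + (−ε(S'²+z²)+aS'z)t²)`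
equals the displayed degree-4 polynomial in `t`. -/
theorem stmt_19 :
    (1 + Polynomial.C ((1 - εA) * (S19 + zA)) * Polynomial.X
        + Polynomial.C (-εA * (S19 ^ 2 + zA ^ 2) + aA * S19 * zA) * Polynomial.X ^ 2)
      * (1 + Polynomial.C ((1 - εA) * (S19' + zA)) * Polynomial.X
        + Polynomial.C (-εA * (S19' ^ 2 + zA ^ 2) + aA * S19' * zA) * Polynomial.X ^ 2)
    = 1 + Polynomial.C (AdjoinRoot.of q19 (2 * (1 - cε) * (x19 + y19 + z19))) * Polynomial.X
      + Polynomial.C (AdjoinRoot.of q19 (2 * (1 - 2 * cε) * (x19 ^ 2 + y19 ^ 2 + z19 ^ 2)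
          + (ca + 4) * (1 - cε) * (x19 * y19 + x19 * z19 + y19 * z19))) * Polynomial.X ^ 2
      + Polynomial.C (AdjoinRoot.of q19 (2 * (1 - cε) * (x19 ^ 3 + y19 ^ 3 + z19 ^ 3)
          + 2 * (1 - cε) * (1 + ca)
            * (x19 ^ 2 * y19 + x19 ^ 2 * z19 + y19 ^ 2 * x19 + y19 ^ 2 * z19
              + z19 ^ 2 * x19 + z19 ^ 2 * y19)
          + 2 * (1 - cε) * (ca ^ 2 - ca + 4) * (x19 * y19 * z19))) * Polynomial.X ^ 3
      + Polynomial.C (AdjoinRoot.of q19 ((x19 ^ 4 + y19 ^ 4 + z19 ^ 4)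
          + 2 * ca * (x19 ^ 3 * y19 + x19 ^ 3 * z19 + y19 ^ 3 * x19 + y19 ^ 3 * z19
              + z19 ^ 3 * x19 + z19 ^ 3 * y19)
          + (2 + ca ^ 2) * (x19 ^ 2 * y19 ^ 2 + x19 ^ 2 * z19 ^ 2 + y19 ^ 2 * z19 ^ 2)
          + 2 * (ca ^ 2 + ca)
            * (x19 ^ 2 * y19 * z19 + x19 * y19 ^ 2 * z19 + x19 * y19 * z19 ^ 2)))
          * Polynomial.X ^ 4 := by
  rw [series_mul_series_of_relations εA_sq one_add_εA_mul_aA aA_sub_sq_mul_aA_add S19_add_S19'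
    S19_mul_S19']
  simp only [map_add, map_mul, map_sub, map_pow, map_one, map_ofNat]
  rfl
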